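/- arXiv:2312.01551 — 3 statements merged into one kernel-verified Lean document; each statement's English description precedes it below -/
import Mathlib

section
/- Let [n_1, ..., n_i] be a partition of n with dual partition [m_1, ..., m_j], and let [l_1, ..., l_k] be another partition of n. Then [n_1, ..., n_i] dominates [l_1, ..., l_k] (i.e. i ≤ k and n_1 + ... + n_t ≥ l_1 + ... + l_t for all 1 ≤ t ≤ i) if and only if there exists a k × j matrix (a_{s,u}) with entries in {0,1} such that the s-th row sum equals l_s for every 1 ≤ s ≤ k and the u-th column sum equals m_u for every 1 ≤ u ≤ j. -/
/-!
Counting the ones of a 0/1 matrix that lie in its first `t` rows column by column bounds the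
sum of the first `t` row sums by `∑ᵤ min t mᵤ`, which is the sum of the first `t` parts of the
dual of `(mᵤ)`; as the dual of the dual of `[N]` is `[N]`, a matrix yields dominance.
Conversely, dominance `[N] ≻ [L]` gives `∑ₛ min u Nₛ ≤ ∑ₛ min u Lₛ` for every `u`, which bounds
the sum of any `u` column sums by `∑ₛ min u Lₛ`. Under these Gale–Ryser inequalities the matrix
is built one column at a time, placing the ones of a column in the rows with the largest
remaining row sums; the inequalities survive this step.
-/

open Finset

section ZeroOneMatrix

variable {ι κ : Type*}

lemma exists_subset_card_eq_forall_le [DecidableEq ι] {α : Type*} [LinearOrder α] (f : ι → α)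
    (s : Finset ι) {n : ℕ} (hn : n ≤ #s) :
    ∃ t ⊆ s, #t = n ∧ ∀ x ∈ t, ∀ y ∈ s \ t, f y ≤ f x := by
  induction n with
  | zero => exact ⟨∅, empty_subset s, card_empty, by simp⟩
  | succ n ih =>
    obtain ⟨t, hts, htn, htop⟩ := ih (by omega)
    obtain ⟨y, hy, hymax⟩ := exists_max_image (s \ t) f <| by
      rw [← card_pos, card_sdiff_of_subset hts]; omega
    obtain ⟨hys, hyt⟩ := mem_sdiff.1 hy
    refine ⟨insert y t, insert_subset hys hts, by rw [card_insert_of_notMem hyt, htn], ?_⟩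
    intro x hx z hz
    obtain ⟨hzs, hzyt⟩ := mem_sdiff.1 hz
    have hz' : z ∈ s \ t := mem_sdiff.2 ⟨hzs, fun h => hzyt (mem_insert_of_mem h)⟩
    rcases mem_insert.1 hx with rfl | hxt
    · exact hymax z hz'
    · exact htop x hxt z hz'

lemma exists_subset_card_eq_pos_forall_le [DecidableEq ι] {R : Finset ι} {r : ι → ℕ} {n : ℕ}
    (hn : n ≤ ∑ s ∈ R, min 1 (r s)) :
    ∃ T ⊆ R, #T = n ∧ (∀ s ∈ T, 0 < r s) ∧ ∀ x ∈ T, ∀ y ∈ R \ T, r y ≤ r x := by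
  have hpos : ∑ s ∈ R, min 1 (r s) = #{s ∈ R | 0 < r s} := by
    rw [card_filter]; exact sum_congr rfl fun s _ => by split_ifs <;> omega
  obtain ⟨T, hTR, hTn, htop⟩ := exists_subset_card_eq_forall_le r _ (hpos ▸ hn)
  refine ⟨T, hTR.trans (filter_subset _ _), hTn, fun s hs => (mem_filter.1 (hTR hs)).2, ?_⟩
  intro x hx y hy
  obtain ⟨hyR, hyT⟩ := mem_sdiff.1 hy
  by_cases hy₀ : 0 < r y
  · exact htop x hx y (mem_sdiff.2 ⟨mem_filter.2 ⟨hyR, hy₀⟩, hyT⟩)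
  · omega

lemma sum_min_le_or_sum_min_succ_le [DecidableEq ι] {R T : Finset ι} {r : ι → ℕ} (hTR : T ⊆ R)
    (htop : ∀ x ∈ T, ∀ y ∈ R \ T, r y ≤ r x) (u : ℕ) :
    ∑ s ∈ R, min u (r s) ≤ ∑ s ∈ R, min u (if s ∈ T then r s - 1 else r s) ∨
      ∑ s ∈ R, min (u + 1) (r s) ≤
        ∑ s ∈ R, min u (if s ∈ T then r s - 1 else r s) + #T := by
  by_cases h : ∀ x ∈ T, u < r x
  · left
    refine sum_le_sum fun s _ => ?_
    split_ifs with hsT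
    · have := h s hsT; omega
    · exact le_rfl
  · obtain ⟨x, hxT, hxu⟩ : ∃ x ∈ T, r x ≤ u := by simpa using h
    right
    rw [card_eq_sum_ite hTR, ← sum_add_distrib]
    refine sum_le_sum fun s hs => ?_
    by_cases hsT : s ∈ T
    · simp only [hsT, if_true]; omega
    · have := htop x hxT s (mem_sdiff.2 ⟨hs, hsT⟩)
      simp only [hsT, if_false]; omega

theorem exists_zero_one_matrix_of_forall_sum_le_sum_min [DecidableEq ι] [DecidableEq κ]
    (R : Finset ι) (C : Finset κ) (r : ι → ℕ) (c : κ → ℕ)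
    (hsum : ∑ u ∈ C, c u = ∑ s ∈ R, r s)
    (hle : ∀ S ⊆ C, ∑ u ∈ S, c u ≤ ∑ s ∈ R, min #S (r s)) :
    ∃ a : ι → κ → ℕ, (∀ s u, a s u ≤ 1) ∧ (∀ s ∈ R, ∑ u ∈ C, a s u = r s) ∧
      ∀ u ∈ C, ∑ s ∈ R, a s u = c u := by
  induction C using Finset.induction_on generalizing r with
  | empty =>
    refine ⟨fun _ _ => 0, fun _ _ => zero_le_one, fun s hs => ?_, by simp⟩
    rw [sum_empty, eq_comm, sum_eq_zero_iff] at hsum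
    simp [hsum s hs]
  | insert u₀ C hu₀ ih =>
    obtain ⟨T, hTR, hTc, hTpos, htop⟩ :=
      exists_subset_card_eq_pos_forall_le (by simpa using hle {u₀} (by simp))
    set r' : ι → ℕ := fun s => if s ∈ T then r s - 1 else r s
    have hr : ∀ s ∈ R, r s = r' s + if s ∈ T then 1 else 0 := fun s _ => by
      by_cases hsT : s ∈ T
      · have := hTpos s hsT; simp only [r', hsT, if_true]; omega
      · simp [r', hsT]
    have hsum' : ∑ u ∈ C, c u = ∑ s ∈ R, r' s := by
      rw [sum_insert hu₀, sum_congr rfl hr, sum_add_distrib, ← card_eq_sum_ite hTR, hTc]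
        at hsum
      omega
    have hle' : ∀ S ⊆ C, ∑ u ∈ S, c u ≤ ∑ s ∈ R, min #S (r' s) := by
      intro S hS
      have hu₀S : u₀ ∉ S := fun h => hu₀ (hS h)
      rcases sum_min_le_or_sum_min_succ_le hTR htop #S with h | h
      · exact (hle S (hS.trans (subset_insert _ _))).trans h
      · have h' : ∑ s ∈ R, min (#S + 1) (r s) ≤ ∑ s ∈ R, min #S (r' s) + #T := h
        have := hle (insert u₀ S) (insert_subset_insert _ hS)
        rw [sum_insert hu₀S, card_insert_of_notMem hu₀S] at this
        omega
    obtain ⟨a, ha01, hrow, hcol⟩ := ih r' hsum' hle'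
    refine ⟨fun s => Function.update (a s) u₀ (if s ∈ T then 1 else 0), fun s u => ?_,
      fun s hs => ?_, fun u hu => ?_⟩
    · dsimp only
      rcases eq_or_ne u u₀ with rfl | hu
      · simp only [Function.update_self]; split_ifs <;> omega
      · rw [Function.update_of_ne hu]; exact ha01 s u
    · have hC : ∀ u ∈ C, Function.update (a s) u₀ (if s ∈ T then 1 else 0) u = a s u :=
        fun u hu => Function.update_of_ne (ne_of_mem_of_not_mem hu hu₀) _ _
      dsimp only
      rw [sum_insert hu₀, Function.update_self, sum_congr rfl hC, hrow s hs, hr s hs, add_comm]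
    · dsimp only
      rcases mem_insert.1 hu with rfl | huC
      · simp only [Function.update_self]; rw [← card_eq_sum_ite hTR, hTc]
      · simp only [Function.update_of_ne (ne_of_mem_of_not_mem huC hu₀)]; exact hcol u huC

lemma sum_sum_le_sum_min_card {a : ι → κ → ℕ} {Q R : Finset ι} {C : Finset κ} (hQR : Q ⊆ R)
    (ha : ∀ s ∈ R, ∀ u ∈ C, a s u ≤ 1) :
    ∑ s ∈ Q, ∑ u ∈ C, a s u ≤ ∑ u ∈ C, min #Q (∑ s ∈ R, a s u) := by
  rw [sum_comm]
  refine sum_le_sum fun u hu => le_min ?_ (sum_le_sum_of_subset hQR)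
  simpa using sum_le_card_nsmul Q (a · u) 1 fun s hs => ha s (hQR hs) u hu

end ZeroOneMatrix

section DualPartition

def dualPart (f : ℕ → ℕ) (i u : ℕ) : ℕ := #{s ∈ range i | u ≤ f s}

variable {f : ℕ → ℕ} {i : ℕ}

lemma lt_dualPart_iff (hf : AntitoneOn f (Set.Iio i)) {u s : ℕ} :
    s < dualPart f i u ↔ s < i ∧ u ≤ f s := by
  have hdown : ∀ ⦃x y⦄, x ≤ y → y ∈ {s ∈ range i | u ≤ f s} → x ∈ {s ∈ range i | u ≤ f s} := by
    intro x y hxy hy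
    simp only [mem_filter, mem_range] at hy ⊢
    exact ⟨by omega, hy.2.trans (hf (Set.mem_Iio.2 (by omega)) (Set.mem_Iio.2 hy.1) hxy)⟩
  constructor
  · intro hs
    by_contra hns
    have hsub : {s ∈ range i | u ≤ f s} ⊆ range s := fun y hy =>
      mem_range.2 <| lt_of_not_ge fun hsy => hns (by simpa using hdown hsy hy)
    have := card_le_card hsub
    rw [card_range] at this
    exact absurd hs (by unfold dualPart; omega)
  · intro hs
    have hsub : range (s + 1) ⊆ {s ∈ range i | u ≤ f s} := fun y hy =>
      hdown (Nat.lt_succ_iff.1 (mem_range.1 hy)) (by simpa using hs)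
    have := card_le_card hsub
    rwa [card_range] at this

lemma min_dualPart (hf : AntitoneOn f (Set.Iio i)) {t : ℕ} (hti : t ≤ i) (u : ℕ) :
    min t (dualPart f i u) = dualPart f t u :=
  eq_of_forall_lt_iff fun s => by
    rw [lt_min_iff, lt_dualPart_iff hf, lt_dualPart_iff (hf.mono (Set.Iio_subset_Iio hti))]
    omega

lemma sum_dualPart_eq_sum_card (f : ℕ → ℕ) (i : ℕ) (S : Finset ℕ) :
    ∑ v ∈ S, dualPart f i v = ∑ s ∈ range i, #{v ∈ S | v ≤ f s} :=
  sum_card_bipartiteAbove_eq_sum_card_bipartiteBelow _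

lemma sum_dualPart_le (f : ℕ → ℕ) (i : ℕ) {S : Finset ℕ} (hS : 0 ∉ S) :
    ∑ v ∈ S, dualPart f i v ≤ ∑ s ∈ range i, min #S (f s) := by
  rw [sum_dualPart_eq_sum_card]
  refine sum_le_sum fun s _ => le_min (card_filter_le _ _) ?_
  calc #{v ∈ S | v ≤ f s} ≤ #(Icc 1 (f s)) := card_le_card fun v hv => by
        obtain ⟨hvS, hvf⟩ := mem_filter.1 hv
        exact mem_Icc.2 ⟨Nat.one_le_iff_ne_zero.2 (ne_of_mem_of_not_mem hvS hS), hvf⟩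
    _ = f s := by simp

lemma sum_Icc_dualPart {u : ℕ} (h : ∀ s < i, f s ≤ u) :
    ∑ v ∈ Icc 1 u, dualPart f i v = ∑ s ∈ range i, f s := by
  rw [sum_dualPart_eq_sum_card]
  refine sum_congr rfl fun s hs => ?_
  have := h s (mem_range.1 hs)
  rw [show {v ∈ Icc 1 u | v ≤ f s} = Icc 1 (f s) by ext v; simp only [mem_filter, mem_Icc]; omega]
  simp

lemma sum_range_min_eq (hf : AntitoneOn f (Set.Iio i)) (u : ℕ) :
    ∑ s ∈ range i, min u (f s) = dualPart f i u * u + ∑ s ∈ Ico (dualPart f i u) i, f s := by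
  have hdi : dualPart f i u ≤ i := (card_filter_le _ _).trans (card_range i).le
  rw [← sum_range_add_sum_Ico _ hdi]
  congr 1
  · rw [show dualPart f i u * u = ∑ s ∈ range (dualPart f i u), u by simp]
    refine sum_congr rfl fun s hs => ?_
    have := (lt_dualPart_iff hf).1 (mem_range.1 hs)
    omega
  · refine sum_congr rfl fun s hs => ?_
    obtain ⟨hds, hsi⟩ := mem_Ico.1 hs
    have : ¬ (s < i ∧ u ≤ f s) := fun h => absurd ((lt_dualPart_iff hf).2 h) (by omega)
    omega

lemma sum_min_le_sum_min_of_dominates {N L : ℕ → ℕ} {k : ℕ} (hL : AntitoneOn L (Set.Iio k))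
    (hik : i ≤ k) (hsum : ∑ s ∈ range i, N s = ∑ s ∈ range k, L s)
    (hdom : ∀ t ≤ i, ∑ s ∈ range t, L s ≤ ∑ s ∈ range t, N s) (u : ℕ) :
    ∑ s ∈ range i, min u (N s) ≤ ∑ s ∈ range k, min u (L s) := by
  rw [sum_range_min_eq hL]
  set t := dualPart L k u
  have hmin_le : ∀ j, ∑ s ∈ range j, min u (N s) ≤ j * u := fun j => by
    simpa using sum_le_card_nsmul (range j) _ u fun s _ => min_le_left u (N s)
  rcases le_or_gt i t with hit | hti
  · exact (hmin_le i).trans ((Nat.mul_le_mul_right u hit).trans (Nat.le_add_right _ _))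
  · have hN := sum_range_add_sum_Ico N hti.le
    have hL' := sum_range_add_sum_Ico L (hti.le.trans hik)
    have hNmin := sum_range_add_sum_Ico (fun s => min u (N s)) hti.le
    have hIco : ∑ s ∈ Ico t i, min u (N s) ≤ ∑ s ∈ Ico t i, N s :=
      sum_le_sum fun s _ => min_le_right _ _
    have := hmin_le t
    have := hdom t hti.le
    omega

end DualPartition

theorem stmt_1_general (n i k : ℕ) (hi : 0 < i)
    (N L : ℕ → ℕ)
    (hNanti : ∀ s t, s ≤ t → t < i → N t ≤ N s) (hNpos : ∀ s, s < i → 0 < N s)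
    (hNsum : ∑ s ∈ Finset.range i, N s = n)
    (hLanti : ∀ s t, s ≤ t → t < k → L t ≤ L s)
    (hLsum : ∑ s ∈ Finset.range k, L s = n) :
    (i ≤ k ∧ ∀ t, t ≤ i →
        ∑ s ∈ Finset.range t, L s ≤ ∑ s ∈ Finset.range t, N s) ↔
    (∃ a : ℕ → ℕ → ℕ,
      (∀ s u, s < k → 1 ≤ u → u ≤ N 0 → a s u ≤ 1) ∧
      (∀ s, s < k → ∑ u ∈ Finset.Icc 1 (N 0), a s u = L s) ∧
      (∀ u, 1 ≤ u → u ≤ N 0 → ∑ s ∈ Finset.range k, a s u =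
        ((Finset.range i).filter (fun s => u ≤ N s)).card)) := by
  have hN : AntitoneOn N (Set.Iio i) := fun s _ t ht hst => hNanti s t hst ht
  have hL : AntitoneOn L (Set.Iio k) := fun s _ t ht hst => hLanti s t hst ht
  have hN0 : ∀ s < i, N s ≤ N 0 := fun s hs => hNanti 0 s s.zero_le hs
  constructor
  · rintro ⟨hik, hdom⟩
    obtain ⟨a, ha01, hrow, hcol⟩ := exists_zero_one_matrix_of_forall_sum_le_sum_min
      (range k) (Icc 1 (N 0)) L (dualPart N i) (by rw [sum_Icc_dualPart hN0, hNsum, hLsum])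
      fun S hS => (sum_dualPart_le N i fun h0 => by simpa using hS h0).trans
        (sum_min_le_sum_min_of_dominates hL hik (by rw [hNsum, hLsum]) hdom #S)
    exact ⟨a, fun s u _ _ _ => ha01 s u, fun s hs => hrow s (mem_range.2 hs),
      fun u h1 h2 => hcol u (mem_Icc.2 ⟨h1, h2⟩)⟩
  · rintro ⟨a, ha01, hrow, hcol⟩
    have hik : i ≤ k := calc
      i = dualPart N i 1 := by
        have : {s ∈ range i | 1 ≤ N s} = range i :=
          filter_true_of_mem fun s hs => hNpos s (mem_range.1 hs)
        rw [dualPart, this, card_range]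
      _ = ∑ s ∈ range k, a s 1 := (hcol 1 le_rfl (hNpos 0 hi)).symm
      _ ≤ k := by
        simpa using sum_le_card_nsmul (range k) (a · 1) 1
          fun s hs => ha01 s 1 (mem_range.1 hs) le_rfl (hNpos 0 hi)
    refine ⟨hik, fun t hti => ?_⟩
    calc ∑ s ∈ range t, L s = ∑ s ∈ range t, ∑ u ∈ Icc 1 (N 0), a s u :=
          sum_congr rfl fun s hs => (hrow s (by simp at hs; omega)).symm
      _ ≤ ∑ u ∈ Icc 1 (N 0), min #(range t) (∑ s ∈ range k, a s u) :=
          sum_sum_le_sum_min_card (range_subset_range.2 (hti.trans hik))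
            fun s hs u hu => ha01 s u (mem_range.1 hs) (mem_Icc.1 hu).1 (mem_Icc.1 hu).2
      _ = ∑ u ∈ Icc 1 (N 0), dualPart N t u := sum_congr rfl fun u hu => by
          rw [hcol u (mem_Icc.1 hu).1 (mem_Icc.1 hu).2, card_range]
          exact min_dualPart hN hti u
      _ = ∑ s ∈ range t, N s := sum_Icc_dualPart fun s hs => hN0 s (by omega)

/-- Dominance is characterized by 0/1 matrices.  A partition of `n` with `i`
parts is encoded as `N : ℕ → ℕ`, weakly decreasing and positive on `[0, i)`
with `∑_{s<i} N s = n`; its largest part is `N 0` and its dual partition has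
parts `m u = #{s < i : u ≤ N s}` for `1 ≤ u ≤ N 0`.  Then `[N] ≻ [L]`
(dominance) holds iff there is a `k × (N 0)` matrix with entries in `{0,1}`
whose row sums are the parts of `L` and whose column sums are the parts of the
dual partition of `[N]`. -/
theorem stmt_1 (n i k : ℕ) (hn : 0 < n) (hi : 0 < i) (hk : 0 < k)
    (N L : ℕ → ℕ)
    (hNanti : ∀ s t, s ≤ t → t < i → N t ≤ N s) (hNpos : ∀ s, s < i → 0 < N s)
    (hNsum : ∑ s ∈ Finset.range i, N s = n)
    (hLanti : ∀ s t, s ≤ t → t < k → L t ≤ L s) (hLpos : ∀ s, s < k → 0 < L s)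
    (hLsum : ∑ s ∈ Finset.range k, L s = n) :
    (i ≤ k ∧ ∀ t, t ≤ i →
        ∑ s ∈ Finset.range t, L s ≤ ∑ s ∈ Finset.range t, N s) ↔
    (∃ a : ℕ → ℕ → ℕ,
      (∀ s u, s < k → 1 ≤ u → u ≤ N 0 → a s u ≤ 1) ∧
      (∀ s, s < k → ∑ u ∈ Finset.Icc 1 (N 0), a s u = L s) ∧
      (∀ u, 1 ≤ u → u ≤ N 0 → ∑ s ∈ Finset.range k, a s u =
        ((Finset.range i).filter (fun s => u ≤ N s)).card)) :=
  stmt_1_general n i k hi N L hNanti hNpos hNsum hLanti hLsum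
end

section
/- Let n_1, ..., n_k be positive integers and for each 1 ≤ i ≤ k let τ_i and σ_i be partitions of n_i. Suppose τ_i dominates σ_i for every i, and suppose the concatenations (disjoint unions as multisets) τ_1 ⊔ τ_2 ⊔ ... ⊔ τ_k and σ_1 ⊔ σ_2 ⊔ ... ⊔ σ_k are equal as partitions of n_1 + ... + n_k. Then τ_i = σ_i for every 1 ≤ i ≤ k. -/
/-!
The sum of the squares of the parts is additive under `⊔`, so it takes the same value on the two
concatenations. On the other hand it strictly increases along dominance: padding with zeros,
`∑ τⱼ² = ∑ σⱼ² + ∑ (τⱼ - σⱼ)² + 2 ∑ (τⱼ - σⱼ) σⱼ`, and the last sum is nonnegative by Abel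
summation, since `σ` decreases and the partial sums of `τ - σ` are nonnegative by dominance.
-/

open Finset

theorem Finset.sum_range_mul_nonneg_of_antitone {R : Type*} [CommRing R] [LinearOrder R]
    [IsStrictOrderedRing R] {f g : ℕ → R} {n : ℕ} (hg : Antitone g) (hgn : 0 ≤ g n)
    (hf : ∀ m ≤ n, 0 ≤ ∑ i ∈ range m, f i) : 0 ≤ ∑ i ∈ range n, f i * g i := by
  rcases Nat.eq_zero_or_pos n with rfl | hn
  · simp
  simp_rw [mul_comm (f _), ← smul_eq_mul]
  rw [sum_range_by_parts, sub_nonneg]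
  refine (sum_nonpos fun i hi => ?_).trans (mul_nonneg (hgn.trans (hg (by omega))) (hf n le_rfl))
  exact mul_nonpos_of_nonpos_of_nonneg (sub_nonpos.2 (hg (by omega)))
    (hf _ (by rw [mem_range] at hi; omega))

namespace List

def Dominates (l₁ l₂ : List ℕ) : Prop :=
  l₁.length ≤ l₂.length ∧ ∀ t, t ≤ l₁.length → (l₂.take t).sum ≤ (l₁.take t).sum

theorem sum_range_getD {M : Type*} [AddCommMonoid M] (l : List M) (m : ℕ) :
    ∑ j ∈ Finset.range m, l.getD j 0 = (l.take m).sum := by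
  induction m with
  | zero => simp
  | succ m ih =>
    rw [Finset.sum_range_succ, ih]
    rcases lt_or_ge m l.length with h | h
    · rw [sum_take_succ _ _ h, getD_eq_getElem _ _ h]
    · rw [getD_eq_default _ _ h, take_of_length_le h, take_of_length_le (by omega), add_zero]

theorem sum_range_getD_comp {M N : Type*} [Zero M] [AddCommMonoid N] (l : List M) {m : ℕ}
    (hm : l.length ≤ m) {f : M → N} (hf : f 0 = 0) :
    ∑ j ∈ Finset.range m, f (l.getD j 0) = (l.map f).sum := by
  rw [← take_of_length_le (l := l.map f) (by simpa using hm), ← sum_range_getD]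
  simp_rw [← hf, getD_map]

theorem antitone_getD {α : Type*} [Preorder α] {l : List α} {d : α}
    (hl : l.Pairwise (· ≥ ·)) (hd : ∀ x ∈ l, d ≤ x) : Antitone (l.getD · d) := by
  intro i j hij
  change l.getD j d ≤ l.getD i d
  rcases lt_or_ge j l.length with hj | hj
  · simp only [getD_eq_getElem _ _ hj, getD_eq_getElem _ _ (hij.trans_lt hj)]
    exact hl.sortedGE.antitone_get (a := ⟨i, hij.trans_lt hj⟩) (b := ⟨j, hj⟩) hij
  · rw [getD_eq_default _ _ hj]
    rcases lt_or_ge i l.length with hi | hi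
    · rw [getD_eq_getElem _ _ hi]; exact hd _ (getElem_mem hi)
    · rw [getD_eq_default _ _ hi]

theorem eq_of_getD_eq_of_length_le {α : Type*} {l₁ l₂ : List α} {d : α}
    (hlen : l₁.length ≤ l₂.length) (hd : d ∉ l₂)
    (h : ∀ j < l₂.length, l₁.getD j d = l₂.getD j d) : l₁ = l₂ := by
  have hlen' : l₁.length = l₂.length := by
    refine hlen.antisymm (not_lt.1 fun hlt => hd ?_)
    rw [← getD_eq_default l₁ d le_rfl, h _ hlt, getD_eq_getElem _ _ hlt]
    exact getElem_mem hlt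
  refine ext_getElem hlen' fun j h₁ h₂ => ?_
  rw [← getD_eq_getElem l₁ d h₁, ← getD_eq_getElem l₂ d h₂, h j h₂]

theorem Dominates.take_sum_le {l₁ l₂ : List ℕ} (h : l₁.Dominates l₂) (hsum : l₁.sum = l₂.sum)
    (m : ℕ) : (l₂.take m).sum ≤ (l₁.take m).sum := by
  rcases le_or_gt m l₁.length with hm | hm
  · exact h.2 m hm
  · rw [take_of_length_le hm.le, hsum]
    exact (take_sublist _ _).sum_le_sum fun _ _ => Nat.zero_le _

theorem Dominates.sum_sq_add_sum_sq_sub_le {l₁ l₂ : List ℕ} (h : l₁.Dominates l₂)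
    (h₂ : l₂.Pairwise (· ≥ ·)) (hsum : l₁.sum = l₂.sum) :
    (((l₂.map (· ^ 2)).sum : ℕ) : ℤ) +
        ∑ j ∈ Finset.range l₂.length, ((l₁.getD j 0 : ℤ) - l₂.getD j 0) ^ 2 ≤
      (((l₁.map (· ^ 2)).sum : ℕ) : ℤ) := by
  set q := l₂.length
  set t : ℕ → ℤ := fun j => l₁.getD j 0
  set s : ℕ → ℤ := fun j => l₂.getD j 0
  have hsq : ∀ l : List ℕ, l.length ≤ q →
      ∑ j ∈ Finset.range q, (l.getD j 0 : ℤ) ^ 2 = (((l.map (· ^ 2)).sum : ℕ) : ℤ) := by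
    intro l hl
    rw [sum_range_getD_comp l hl (f := fun x : ℕ => (x : ℤ) ^ 2) (by simp)]
    push_cast [map_map]
    rfl
  have hcross : 0 ≤ ∑ j ∈ Finset.range q, (t j - s j) * s j := by
    refine Finset.sum_range_mul_nonneg_of_antitone ?_ (by positivity) fun m _ => ?_
    · exact fun i j hij => Nat.cast_le.2 (antitone_getD h₂ (fun _ _ => Nat.zero_le _) hij)
    · rw [Finset.sum_sub_distrib, sub_nonneg]
      simp only [t, s]
      exact_mod_cast (sum_range_getD l₂ m).trans_le
        ((h.take_sum_le hsum m).trans (sum_range_getD l₁ m).ge)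
  calc (((l₂.map (· ^ 2)).sum : ℕ) : ℤ) + ∑ j ∈ Finset.range q, (t j - s j) ^ 2
      ≤ ∑ j ∈ Finset.range q, s j ^ 2 + ∑ j ∈ Finset.range q, (t j - s j) ^ 2 +
          2 * ∑ j ∈ Finset.range q, (t j - s j) * s j := by
        rw [hsq l₂ le_rfl]; linarith
    _ = ∑ j ∈ Finset.range q, t j ^ 2 := by
        rw [Finset.mul_sum, ← Finset.sum_add_distrib, ← Finset.sum_add_distrib]
        exact Finset.sum_congr rfl fun _ _ => by ring
    _ = (((l₁.map (· ^ 2)).sum : ℕ) : ℤ) := hsq l₁ h.1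

theorem Dominates.sum_sq_lt {l₁ l₂ : List ℕ} (h : l₁.Dominates l₂)
    (h₂ : l₂.Pairwise (· ≥ ·)) (hpos : ∀ x ∈ l₂, 0 < x) (hsum : l₁.sum = l₂.sum)
    (hne : l₁ ≠ l₂) : (l₂.map (· ^ 2)).sum < (l₁.map (· ^ 2)).sum := by
  have hdefect : 0 < ∑ j ∈ Finset.range l₂.length, ((l₁.getD j 0 : ℤ) - l₂.getD j 0) ^ 2 := by
    refine (Finset.sum_nonneg fun _ _ => sq_nonneg _).lt_of_ne fun h0 => hne ?_
    refine eq_of_getD_eq_of_length_le h.1 (fun hmem => (hpos 0 hmem).ne rfl) fun j hj => ?_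
    have := (Finset.sum_eq_zero_iff_of_nonneg fun _ _ => sq_nonneg _).1 h0.symm j
      (Finset.mem_range.2 hj)
    exact_mod_cast sub_eq_zero.1 (pow_eq_zero_iff two_ne_zero |>.1 this)
  exact_mod_cast (lt_add_of_pos_right _ hdefect).trans_le (h.sum_sq_add_sum_sq_sub_le h₂ hsum)

end List

theorem stmt_2_general (k : ℕ) (nvec : Fin k → ℕ)
    (τ σ : Fin k → List ℕ)
    (hτsum : ∀ i, (τ i).sum = nvec i)
    (hσsort : ∀ i, (σ i).Pairwise (· ≥ ·)) (hσpos : ∀ i, ∀ x ∈ σ i, 0 < x)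
    (hσsum : ∀ i, (σ i).sum = nvec i)
    (hdom : ∀ i, (τ i).length ≤ (σ i).length ∧
      ∀ t, t ≤ (τ i).length → ((σ i).take t).sum ≤ ((τ i).take t).sum)
    (hconcat : (∑ i, ((τ i : Multiset ℕ))) = ∑ i, ((σ i : Multiset ℕ))) :
    ∀ i, τ i = σ i := by
  have hsq : ∑ i, ((τ i).map (· ^ 2)).sum = ∑ i, ((σ i).map (· ^ 2)).sum := by
    simpa [map_sum] using
      congrArg (Multiset.sumAddMonoidHom.comp (Multiset.mapAddMonoidHom (· ^ 2))) hconcat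
  have hlt : ∀ i, τ i ≠ σ i → ((σ i).map (· ^ 2)).sum < ((τ i).map (· ^ 2)).sum := fun i =>
    List.Dominates.sum_sq_lt (hdom i) (hσsort i) (hσpos i) ((hτsum i).trans (hσsum i).symm)
  intro i
  by_contra hne
  refine (Finset.sum_lt_sum (fun j _ => ?_) ⟨i, Finset.mem_univ i, hlt i hne⟩).ne' hsq
  exact (eq_or_ne (τ j) (σ j)).elim (fun h => h ▸ le_rfl) fun h => (hlt j h).le

/-- If `τᵢ` and `σᵢ` are partitions of `nᵢ` (encoded as weakly decreasing lists of
positive naturals with sum `nᵢ`), `τᵢ` dominates `σᵢ` for every `i`, and the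
concatenations (as multisets) `τ₁ ⊔ ⋯ ⊔ τₖ` and `σ₁ ⊔ ⋯ ⊔ σₖ` coincide, then
`τᵢ = σᵢ` for every `i`. -/
theorem stmt_2 (k : ℕ) (nvec : Fin k → ℕ) (hn : ∀ i, 0 < nvec i)
    (τ σ : Fin k → List ℕ)
    (hτsort : ∀ i, (τ i).Pairwise (· ≥ ·)) (hτpos : ∀ i, ∀ x ∈ τ i, 0 < x)
    (hτsum : ∀ i, (τ i).sum = nvec i)
    (hσsort : ∀ i, (σ i).Pairwise (· ≥ ·)) (hσpos : ∀ i, ∀ x ∈ σ i, 0 < x)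
    (hσsum : ∀ i, (σ i).sum = nvec i)
    (hdom : ∀ i, (τ i).length ≤ (σ i).length ∧
      ∀ t, t ≤ (τ i).length → ((σ i).take t).sum ≤ ((τ i).take t).sum)
    (hconcat : (∑ i, ((τ i : Multiset ℕ))) = ∑ i, ((σ i : Multiset ℕ))) :
    ∀ i, τ i = σ i :=
  stmt_2_general k nvec τ σ hτsum hσsort hσpos hσsum hdom hconcat
end

section
/- Let R be a Noetherian local ring and M a nonzero finitely generated R-module, and suppose there is a finite local homomorphism S → R of Noetherian local rings (so R is a finite S-module and the maximal ideal of S maps into that of R). Then depth_R(M) = depth_S(M), where M is viewed as an S-module via the homomorphism. -/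
/-!
Images of `S`-regular sequences in `m_S` are `R`-regular sequences in `m_R`, so only
`depth_R M ≤ depth_S M` needs work. Let `M` have an `R`-regular sequence of length `n + 1` in
`m_R`. The associated primes of `M` are finitely many, and none contracts to `m_S`: by
integrality such a prime would be `m_R`, which contains a nonzerodivisor on `M`. Prime avoidance
gives `y ∈ m_S` regular on `M`. By Rees' theorem (a regular sequence of length `n` in `m_R`
exists iff `Ext^i(k, M) = 0` for `i < n`) and the long exact `Ext` sequence of
`0 → M → M → M ⧸ yM → 0`, the module `M ⧸ yM` has an `R`-regular sequence of length `n` in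
`m_R`, and induction on `n` applies to it.
-/

/-- The depth of a module over a Noetherian local ring `A`: the supremum of
the lengths of `M`-regular sequences contained in the maximal ideal of `A`
(this is the length of a maximal `M`-regular sequence). -/
noncomputable def localDepth (A : Type) [CommRing A] [IsLocalRing A]
    (M : Type) [AddCommGroup M] [Module A M] : ℕ∞ :=
  sSup {d : ℕ∞ | ∃ rs : List A,
    (∀ r ∈ rs, r ∈ IsLocalRing.maximalIdeal A) ∧
    RingTheory.Sequence.IsRegular M rs ∧ (rs.length : ℕ∞) = d}

open RingTheory.Sequence IsLocalRing CategoryTheory Abelian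

universe u

lemma RingTheory.Sequence.isRegular_map_algebraMap_iff {R S M : Type*} [CommRing R] [CommRing S]
    [Algebra R S] [AddCommGroup M] [Module R M] [Module S M] [IsScalarTower R S M]
    (rs : List R) : IsRegular M (rs.map (algebraMap R S)) ↔ IsRegular M rs := by
  rw [isRegular_iff, isRegular_iff, isWeaklyRegular_map_algebraMap_iff, ← Ideal.map_ofList,
    ne_eq, ne_eq, ← Submodule.restrictScalars_inj R S, Ideal.smul_restrictScalars,
    Submodule.restrictScalars_top]

lemma IsLocalRing.maximalIdeal_smul_top_lt_top {A M : Type*} [CommRing A] [IsLocalRing A]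
    [AddCommGroup M] [Module A M] [Module.Finite A M] [Nontrivial M] :
    maximalIdeal A • (⊤ : Submodule A M) < ⊤ :=
  (Submodule.top_ne_ideal_smul_of_le_jacobson_annihilator
    (maximalIdeal_le_jacobson _)).symm.lt_top

lemma IsLocalRing.exists_isRegular_quotSMulTop {A M : Type u} [CommRing A] [IsLocalRing A]
    [IsNoetherianRing A] [AddCommGroup M] [Module A M] [Module.Finite A M] {n : ℕ}
    (h : ∃ rs : List A, rs.length = n + 1 ∧ (∀ r ∈ rs, r ∈ maximalIdeal A) ∧ IsRegular M rs)
    {y : A} (hy : y ∈ maximalIdeal A) (hreg : IsSMulRegular M y) :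
    ∃ rs : List A, rs.length = n ∧ (∀ r ∈ rs, r ∈ maximalIdeal A) ∧
      IsRegular (QuotSMulTop y M) rs := by
  have : Nontrivial M := by obtain ⟨_, -, -, hrs⟩ := h; exact hrs.nontrivial
  have := nontrivial_quotSMulTop_of_mem_maximalIdeal M hy
  have hext := ((ModuleCat.exists_isRegular_tfae (maximalIdeal A) (n + 1) (ModuleCat.of A M)
    maximalIdeal_smul_top_lt_top).out 3 1).mp h
  refine ((ModuleCat.exists_isRegular_tfae (maximalIdeal A) n
    (ModuleCat.of A (QuotSMulTop y M)) maximalIdeal_smul_top_lt_top).out 1 3).mp fun i hi => ?_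
  have hses := IsSMulRegular.smulShortComplex_shortExact (M := ModuleCat.of A M) hreg
  -- `Ext^i(k, M ⧸ yM)` sits between `Ext^i(k, M)` and `Ext^(i+1)(k, M)`, both zero.
  have hzero := AddCommGrpCat.isZero_of_iff_subsingleton.mpr (hext i (by omega))
  have hzero_succ := AddCommGrpCat.isZero_of_iff_subsingleton.mpr (hext (i + 1) (by omega))
  exact AddCommGrpCat.subsingleton_of_isZero <| ShortComplex.Exact.isZero_of_both_zeros
    (Ext.covariant_sequence_exact₃' _ hses i (i + 1) rfl)
    (hzero.eq_zero_of_src _) (hzero_succ.eq_zero_of_tgt _)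

section IntegralExtension

variable {S : Type*} {R : Type u} [CommRing S] [IsLocalRing S] [CommRing R] [IsLocalRing R]
  [IsNoetherianRing R] [Algebra S R] [Algebra.IsIntegral S R]

theorem exists_mem_maximalIdeal_isSMulRegular_algebraMap {M : Type*} [AddCommGroup M]
    [Module R M] [Module.Finite R M] {x : R} (hx : x ∈ maximalIdeal R)
    (hreg : IsSMulRegular M x) :
    ∃ y ∈ maximalIdeal S, IsSMulRegular M (algebraMap S R y) := by
  have hzd := biUnion_associatedPrimes_eq_compl_regular R M
  by_contra! h
  have hcover : (maximalIdeal S : Set S) ⊆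
      ⋃ p ∈ associatedPrimes R M, (p.comap (algebraMap S R) : Set S) := by
    intro y hy
    have hy' : algebraMap S R y ∈ ⋃ p ∈ associatedPrimes R M, (p : Set R) := by
      rw [hzd]
      exact h y hy
    simpa using hy'
  obtain ⟨p, hp, hle⟩ := (Ideal.subset_union_prime_finite (associatedPrimes.finite R M) ⊥ ⊥
    fun p hp _ _ => hp.isPrime.comap _).mp hcover
  have := hp.isPrime
  have hcomap : p.comap (algebraMap S R) = maximalIdeal S :=
    le_antisymm (le_maximalIdeal (Ideal.comap_ne_top _ this.ne_top)) hle
  have : p.IsMaximal := Ideal.isMaximal_of_isIntegral_of_isMaximal_comap p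
    (hcomap ▸ maximalIdeal.isMaximal S)
  have hxp : x ∈ ⋃ p ∈ associatedPrimes R M, (p : Set R) :=
    Set.mem_biUnion hp (eq_maximalIdeal this ▸ hx)
  rw [hzd] at hxp
  exact hxp hreg

variable [IsLocalHom (algebraMap S R)]

theorem exists_isRegular_map_algebraMap_of_exists_isRegular (n : ℕ) (M : Type u)
    [AddCommGroup M] [Module R M] [Module.Finite R M]
    (h : ∃ rs : List R, rs.length = n ∧ (∀ r ∈ rs, r ∈ maximalIdeal R) ∧ IsRegular M rs) :
    ∃ ys : List S, ys.length = n ∧ (∀ y ∈ ys, y ∈ maximalIdeal S) ∧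
      IsRegular M (ys.map (algebraMap S R)) := by
  induction n generalizing M with
  | zero =>
    obtain ⟨rs, hlen, -, hrs⟩ := h
    obtain rfl := List.length_eq_zero_iff.mp hlen
    exact ⟨[], rfl, by simp, hrs⟩
  | succ n ih =>
    obtain ⟨_ | ⟨x, rs⟩, hlen, hmem, hrs⟩ := h
    · simp at hlen
    obtain ⟨y, hy, hyreg⟩ := exists_mem_maximalIdeal_isSMulRegular_algebraMap (S := S)
      (hmem x List.mem_cons_self) ((isRegular_cons_iff M x rs).mp hrs).1
    have hy' : algebraMap S R y ∈ maximalIdeal R := by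
      rwa [← maximalIdeal_comap (algebraMap S R)] at hy
    obtain ⟨ys, hlen', hmem', hys⟩ := ih _ (exists_isRegular_quotSMulTop
      ⟨x :: rs, hlen, hmem, hrs⟩ hy' hyreg)
    refine ⟨y :: ys, by simp [hlen'], ?_, ?_⟩
    · simpa using ⟨hy, hmem'⟩
    · rw [List.map_cons, isRegular_cons_iff]
      exact ⟨hyreg, hys⟩

end IntegralExtension

theorem stmt_15_general (S R : Type) [CommRing S] [CommRing R]
    [IsNoetherianRing R] [IsLocalRing S] [IsLocalRing R]
    [Algebra S R] [Module.Finite S R] (hloc : IsLocalHom (algebraMap S R))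
    (M : Type) [AddCommGroup M] [Module R M] [Module S M] [IsScalarTower S R M]
    [Module.Finite R M] :
    localDepth R M = localDepth S M := by
  unfold localDepth
  congr 1
  ext d
  constructor
  · rintro ⟨rs, hmem, hrs, rfl⟩
    obtain ⟨ys, hlen, hmem', hys⟩ :=
      exists_isRegular_map_algebraMap_of_exists_isRegular (S := S) _ M ⟨rs, rfl, hmem, hrs⟩
    exact ⟨ys, hmem', (isRegular_map_algebraMap_iff ys).mp hys, by rw [hlen]⟩
  · rintro ⟨ys, hmem, hys, rfl⟩
    refine ⟨ys.map (algebraMap S R), ?_, (isRegular_map_algebraMap_iff ys).mpr hys, by simp⟩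
    simpa [← maximalIdeal_comap (algebraMap S R)] using hmem

/-- If `S → R` is a finite local homomorphism of Noetherian local rings and
`M` is a nonzero finitely generated `R`-module, then the depth of `M` over `R`
equals its depth over `S`. -/
theorem stmt_15 (S R : Type) [CommRing S] [CommRing R]
    [IsNoetherianRing S] [IsNoetherianRing R] [IsLocalRing S] [IsLocalRing R]
    [Algebra S R] [Module.Finite S R] (hloc : IsLocalHom (algebraMap S R))
    (M : Type) [AddCommGroup M] [Module R M] [Module S M] [IsScalarTower S R M]
    [Module.Finite R M] [Nontrivial M] :
    localDepth R M = localDepth S M :=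
  stmt_15_general S R hloc M
end
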